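/- arXiv:2211.05089 — 5 statements merged into one kernel-verified Lean document; each statement's English description precedes it below -/
import Mathlib

section
/- Suppose $s_x, s_\lambda > 0$ with $s_x s_\lambda < 1$, $x_0 \in \mathbb{R}$, $\lambda_0 \geq 0$. Then the minimizer over $(x, \lambda) \in \mathbb{R} \times [0,\infty)$ of $\lambda|x| + \frac{(x-x_0)^2}{2s_x} + \frac{(\lambda-\lambda_0)^2}{2s_\lambda}$ has $\lambda^* = \lambda_0$ if $\lambda_0 \geq \frac{|x_0|}{s_x}$, and $\lambda^* = \frac{(\lambda_0 - s_\lambda|x_0|)^+}{1 - s_\lambda s_x}$ otherwise; and $x^* = (|x_0| - s_x\lambda^*)^+ \mathrm{sgn}(x_0)$. -/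
lemma prox_key (x₀ lam₀ sx sl xs ls s μ : ℝ) (hx : 0 < sx) (hl : 0 < sl)
    (hprod : sx * sl < 1) (hls : 0 ≤ ls)
    (hs1 : |s| ≤ 1) (hs2 : s * xs = |xs|)
    (h1 : x₀ - xs = sx * ls * s)
    (h2 : |xs| + (ls - lam₀) / sl = μ) (hμ : 0 ≤ μ) (hcomp : μ * ls = 0)
    (x lam : ℝ) (hlam : 0 ≤ lam) :
    ls * |xs| + (xs - x₀) ^ 2 / (2 * sx) + (ls - lam₀) ^ 2 / (2 * sl) ≤
      lam * |x| + (x - x₀) ^ 2 / (2 * sx) + (lam - lam₀) ^ 2 / (2 * sl) := by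
  have hl0 : lam₀ = ls - sl * (μ - |xs|) := by
    field_simp at h2; nlinarith [h2]
  have hpos : (0:ℝ) < 2 * sx * sl := by positivity
  have hA0 : (0:ℝ) ≤ |x| := abs_nonneg x
  have hB0 : (0:ℝ) ≤ |xs| := abs_nonneg xs
  have hsxle : s * x ≤ |x| := by
    calc s * x ≤ |s * x| := le_abs_self _
    _ = |s| * |x| := abs_mul _ _
    _ ≤ 1 * |x| := by apply mul_le_mul_of_nonneg_right hs1 hA0
    _ = |x| := one_mul _
  have htri1 : |x| - |xs| ≤ |x - xs| := abs_sub_abs_le_abs_sub x xs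
  have htri2 : -(|x - xs|) ≤ |x| - |xs| := by
    have := abs_sub_abs_le_abs_sub xs x
    rw [abs_sub_comm] at this; linarith
  have hD : |x - xs| ^ 2 = (x - xs) ^ 2 := sq_abs _
  have hu2 : (|x| - |xs|) ^ 2 ≤ (x - xs) ^ 2 := by
    rw [← hD]; exact sq_le_sq' htri2 htri1
  set u : ℝ := |x| - |xs| with hu
  have hq : 0 ≤ sl * u ^ 2 + sx * (lam - ls) ^ 2 + 2 * sx * sl * ((lam - ls) * u) := by
    nlinarith [mul_nonneg hl.le (sq_nonneg (u + sx * (lam - ls))),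
      mul_nonneg (mul_nonneg hx.le (by nlinarith : (0:ℝ) ≤ 1 - sx * sl)) (sq_nonneg (lam - ls))]
  have h4 : 0 ≤ 2 * sx * sl * (ls * (|x| - s * x)) := by
    apply mul_nonneg hpos.le; exact mul_nonneg hls (by linarith)
  have h5 : 0 ≤ 2 * sx * sl * (lam * μ) := by
    apply mul_nonneg hpos.le; exact mul_nonneg hlam hμ
  have hxx : sl * u ^ 2 ≤ sl * (x - xs) ^ 2 := mul_le_mul_of_nonneg_left hu2 hl.le
  have key : 0 ≤ sl * ((x - x₀) ^ 2 - (xs - x₀) ^ 2)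
      + sx * ((lam - lam₀) ^ 2 - (ls - lam₀) ^ 2)
      + 2 * sx * sl * (lam * |x| - ls * |xs|) := by
    have expand : sl * ((x - x₀) ^ 2 - (xs - x₀) ^ 2)
        + sx * ((lam - lam₀) ^ 2 - (ls - lam₀) ^ 2)
        + 2 * sx * sl * (lam * |x| - ls * |xs|)
        = sl * (x - xs) ^ 2 + sx * (lam - ls) ^ 2 + 2 * sx * sl * ((lam - ls) * u)
          + 2 * sx * sl * (ls * (|x| - s * x)) + 2 * sx * sl * (lam * μ) := by
      have hx0 : x₀ = xs + sx * ls * s := by linarith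
      rw [hx0, hl0, hu]
      linear_combination (2 * sx * sl * ls) * hs2 - (2 * sx * sl) * hcomp
    rw [expand]; linarith
  have e1 : (ls * |xs| + (xs - x₀) ^ 2 / (2 * sx) + (ls - lam₀) ^ 2 / (2 * sl)) * (2 * sx * sl)
      = sl * (xs - x₀) ^ 2 + sx * (ls - lam₀) ^ 2 + 2 * sx * sl * (ls * |xs|) := by
    field_simp; ring
  have e2 : (lam * |x| + (x - x₀) ^ 2 / (2 * sx) + (lam - lam₀) ^ 2 / (2 * sl)) * (2 * sx * sl)
      = sl * (x - x₀) ^ 2 + sx * (lam - lam₀) ^ 2 + 2 * sx * sl * (lam * |x|) := by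
    field_simp; ring
  have final : (ls * |xs| + (xs - x₀) ^ 2 / (2 * sx) + (ls - lam₀) ^ 2 / (2 * sl)) * (2 * sx * sl)
      ≤ (lam * |x| + (x - x₀) ^ 2 / (2 * sx) + (lam - lam₀) ^ 2 / (2 * sl)) * (2 * sx * sl) := by
    rw [e1, e2]; linarith
  exact le_of_mul_le_mul_right final hpos

/-- Closed form for the variable-coefficient ℓ₁ proximal operator when `sₓ·s_λ < 1`:
the pair `(x*, λ*)` given by the stated formulas minimizes the proximal cost over
`ℝ × [0,∞)`. -/
theorem vista_prox_small_steps (x₀ lam₀ sx sl : ℝ) (hx : 0 < sx) (hl : 0 < sl)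
    (hprod : sx * sl < 1) (hlam₀ : 0 ≤ lam₀) :
    let lamStar : ℝ :=
      if lam₀ ≥ |x₀| / sx then lam₀ else max (lam₀ - sl * |x₀|) 0 / (1 - sl * sx)
    let xStar : ℝ := max (|x₀| - sx * lamStar) 0 * Real.sign x₀
    ∀ x lam : ℝ, 0 ≤ lam →
      lamStar * |xStar| + (xStar - x₀) ^ 2 / (2 * sx) + (lamStar - lam₀) ^ 2 / (2 * sl) ≤
        lam * |x| + (x - x₀) ^ 2 / (2 * sx) + (lam - lam₀) ^ 2 / (2 * sl) := by
  intro lamStar xStar x lam hlam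
  have hden : (0:ℝ) < 1 - sl * sx := by nlinarith
  have hlsdef : lamStar = if lam₀ ≥ |x₀| / sx then lam₀
      else max (lam₀ - sl * |x₀|) 0 / (1 - sl * sx) := rfl
  have hxsdef : xStar = max (|x₀| - sx * lamStar) 0 * Real.sign x₀ := rfl
  by_cases hcase : lam₀ ≥ |x₀| / sx
  · -- lamStar = lam₀, xStar = 0
    have hLS : lamStar = lam₀ := by rw [hlsdef, if_pos hcase]
    have hxb : |x₀| ≤ lam₀ * sx := (div_le_iff₀ hx).mp hcase
    have hXS : xStar = 0 := by
      rw [hxsdef, hLS, max_eq_right (by nlinarith), zero_mul]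
    rw [hLS, hXS]
    by_cases hz : lam₀ = 0
    · have hx0 : x₀ = 0 := by
        have : |x₀| ≤ 0 := by nlinarith
        exact abs_eq_zero.mp (le_antisymm this (abs_nonneg _))
      exact prox_key x₀ lam₀ sx sl 0 lam₀ 0 0 hx hl hprod hlam₀
        (by simp) (by simp) (by simp [hx0]) (by simp) le_rfl (by ring) x lam hlam
    · have hlpos : 0 < lam₀ := lt_of_le_of_ne hlam₀ (Ne.symm hz)
      refine prox_key x₀ lam₀ sx sl 0 lam₀ (x₀ / (sx * lam₀)) 0 hx hl hprod hlam₀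
        ?_ (by simp) ?_ (by simp) le_rfl (by ring) x lam hlam
      · rw [abs_div, abs_of_pos (by positivity : (0:ℝ) < sx * lam₀),
          div_le_one (by positivity)]
        nlinarith
      · field_simp; ring
  · -- lam₀ < |x₀|/sx
    push_neg at hcase
    have hxb : lam₀ * sx < |x₀| := (lt_div_iff₀ hx).mp hcase
    have hne : x₀ ≠ 0 := by
      intro h; rw [h, abs_zero] at hxb; nlinarith
    have hsign : Real.sign x₀ = 1 ∨ Real.sign x₀ = -1 := by
      rcases hne.lt_or_gt with h | h
      · right; exact Real.sign_of_neg h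
      · left; exact Real.sign_of_pos h
    have hsmul : Real.sign x₀ * |x₀| = x₀ := by
      rcases hne.lt_or_gt with h | h
      · rw [Real.sign_of_neg h, abs_of_neg h]; ring
      · rw [Real.sign_of_pos h, abs_of_pos h]; ring
    have hsmul2 : Real.sign x₀ * x₀ = |x₀| := by
      rcases hne.lt_or_gt with h | h
      · rw [Real.sign_of_neg h, abs_of_neg h]; ring
      · rw [Real.sign_of_pos h, abs_of_pos h]; ring
    have hsgnsq : Real.sign x₀ ^ 2 = 1 := by rcases hsign with h | h <;> simp [h]
    have hsabs : |Real.sign x₀| ≤ 1 := by rcases hsign with h | h <;> simp [h]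
    have hLS : lamStar = max (lam₀ - sl * |x₀|) 0 / (1 - sl * sx) := by
      rw [hlsdef, if_neg (not_le.mpr hcase)]
    by_cases hb : lam₀ ≤ sl * |x₀|
    · -- lamStar = 0, xStar = x₀
      have hLS0 : lamStar = 0 := by
        rw [hLS, max_eq_right (by linarith), zero_div]
      have hXS : xStar = x₀ := by
        rw [hxsdef, hLS0, mul_zero, sub_zero, max_eq_left (abs_nonneg _), mul_comm, hsmul]
      rw [hLS0, hXS]
      refine prox_key x₀ lam₀ sx sl x₀ 0 (Real.sign x₀) (|x₀| - lam₀ / sl) hx hl hprod le_rfl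
        hsabs ?_ (by ring) (by ring) ?_ (by ring) x lam hlam
      · exact hsmul2
      · rw [sub_nonneg, div_le_iff₀ hl]; linarith
    · -- interior case: lamStar = (lam₀ - sl*|x₀|)/(1 - sl*sx) > 0
      push_neg at hb
      have hLSval : lamStar = (lam₀ - sl * |x₀|) / (1 - sl * sx) := by
        rw [hLS, max_eq_left (by linarith)]
      have hLSpos : 0 < lamStar := by rw [hLSval]; exact div_pos (by linarith) hden
      have hxgap : |x₀| - sx * lamStar = (|x₀| - sx * lam₀) / (1 - sl * sx) := by
        rw [hLSval]; rw [eq_div_iff hden.ne', sub_mul, mul_assoc sx, div_mul_cancel₀ _ hden.ne']; ring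
      have hxgpos : 0 < |x₀| - sx * lamStar := by
        rw [hxgap]; apply div_pos (by nlinarith) hden
      have hXS : xStar = (|x₀| - sx * lamStar) * Real.sign x₀ := by
        rw [hxsdef, max_eq_left hxgpos.le]
      have habsXS : |xStar| = |x₀| - sx * lamStar := by
        rw [hXS, abs_mul, abs_of_pos hxgpos]
        rcases hsign with h | h <;> simp [h]
      refine prox_key x₀ lam₀ sx sl xStar lamStar (Real.sign x₀) 0 hx hl hprod hLSpos.le
        hsabs ?_ ?_ ?_ le_rfl (by ring) x lam hlam
      · rw [habsXS, hXS]
        linear_combination (|x₀| - sx * lamStar) * hsgnsq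
      · rw [hXS]
        linear_combination (-1 : ℝ) * hsmul
      · rw [habsXS]
        rw [hLSval]; rw [div_sub' hden.ne', div_div, ← mul_div_assoc, sub_div' hden.ne', div_add_div _ _ hden.ne' (mul_ne_zero hden.ne' hl.ne'), div_eq_zero_iff]; left; ring
end

section
/- Suppose $s_x s_\lambda \geq 1$ with $s_x, s_\lambda > 0$, $x_0 \in \mathbb{R}$, $\lambda_0 \geq 0$. Then a minimizer over $(x,\lambda) \in \mathbb{R} \times [0,\infty)$ of $\lambda|x| + \frac{(x-x_0)^2}{2s_x} + \frac{(\lambda-\lambda_0)^2}{2s_\lambda}$ satisfies $\lambda^* = \lambda_0$ if $\frac{\lambda_0}{\sqrt{s_\lambda}} > \frac{|x_0|}{\sqrt{s_x}}$ and $\lambda^* = 0$ if $\frac{\lambda_0}{\sqrt{s_\lambda}} < \frac{|x_0|}{\sqrt{s_x}}$, with $x^* = (|x_0| - s_x\lambda^*)^+\mathrm{sgn}(x_0)$ in either case. -/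
private lemma quad_min (b m v m₀ : ℝ) (hb : 0 ≤ b) (hm : 0 ≤ m) (hv : 0 ≤ v) (hm₀ : 0 ≤ m₀) :
    min (v^2/2) (m₀^2/2) ≤ m*b + (b-v)^2/2 + (m-m₀)^2/2 := by
  rcases le_total v m₀ with h | h
  · calc min (v^2/2) (m₀^2/2) ≤ v^2/2 := min_le_left _ _
      _ ≤ _ := by nlinarith [sq_nonneg (b+m-m₀), mul_nonneg (sub_nonneg.2 h) hb]
  · calc min (v^2/2) (m₀^2/2) ≤ m₀^2/2 := min_le_right _ _
      _ ≤ _ := by nlinarith [sq_nonneg (b+m-v), mul_nonneg (sub_nonneg.2 h) hm]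

private lemma key (x₀ lam₀ sx sl x lam : ℝ) (hx : 0 < sx) (hl : 0 < sl)
    (hprod : 1 ≤ sx * sl) (hlam : 0 ≤ lam) (hlam₀ : 0 ≤ lam₀) :
    min (x₀^2/(2*sx)) (lam₀^2/(2*sl)) ≤
      lam * |x| + (x - x₀)^2/(2*sx) + (lam - lam₀)^2/(2*sl) := by
  have hsx : (0:ℝ) < Real.sqrt sx := Real.sqrt_pos.2 hx
  have hsl : (0:ℝ) < Real.sqrt sl := Real.sqrt_pos.2 hl
  have hsx2 : Real.sqrt sx ^ 2 = sx := Real.sq_sqrt hx.le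
  have hsl2 : Real.sqrt sl ^ 2 = sl := Real.sq_sqrt hl.le
  have hprod' : 1 ≤ Real.sqrt sx * Real.sqrt sl := by
    rw [← Real.sqrt_mul hx.le]
    calc (1:ℝ) = Real.sqrt 1 := Real.sqrt_one.symm
      _ ≤ _ := Real.sqrt_le_sqrt hprod
  set b := |x| / Real.sqrt sx with hbdef
  set v := |x₀| / Real.sqrt sx with hvdef
  set m := lam / Real.sqrt sl with hmdef
  set m₀ := lam₀ / Real.sqrt sl with hm0def
  have e1 : v^2/2 = x₀^2/(2*sx) := by
    rw [hvdef, div_pow, hsx2, sq_abs]; ring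
  have e2 : m₀^2/2 = lam₀^2/(2*sl) := by
    rw [hm0def, div_pow, hsl2]; ring
  have e3 : (m - m₀)^2/2 = (lam - lam₀)^2/(2*sl) := by
    rw [hmdef, hm0def, div_sub_div_same, div_pow, hsl2]; ring
  have h1 : m * b ≤ lam * |x| := by
    have heq : m * b = lam * |x| / (Real.sqrt sl * Real.sqrt sx) := by
      rw [hmdef, hbdef]; ring
    rw [heq]
    apply div_le_self (by positivity)
    nlinarith
  have h2 : (b - v)^2/2 ≤ (x - x₀)^2/(2*sx) := by
    have ha : |x| - |x₀| ≤ |x - x₀| := abs_sub_abs_le_abs_sub x x₀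
    have hb' : |x₀| - |x| ≤ |x - x₀| := by
      have := abs_sub_abs_le_abs_sub x₀ x
      rwa [abs_sub_comm] at this
    have hsq : (|x| - |x₀|)^2 ≤ (x - x₀)^2 := by
      have := sq_le_sq' (by linarith) ha
      rwa [sq_abs] at this
    have : (b - v)^2 = (|x| - |x₀|)^2 / sx := by
      rw [hbdef, hvdef, div_sub_div_same, div_pow, hsx2]
    rw [this]
    have hc : (|x| - |x₀|)^2 / sx / sx * sx = (|x| - |x₀|)^2 / sx := by field_simp
    rw [div_le_div_iff₀ (by positivity) (by positivity)]
    nlinarith [div_mul_cancel₀ ((|x| - |x₀|)^2) hx.ne']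
  calc min (x₀^2/(2*sx)) (lam₀^2/(2*sl)) = min (v^2/2) (m₀^2/2) := by rw [e1, e2]
    _ ≤ m*b + (b-v)^2/2 + (m-m₀)^2/2 :=
        quad_min b m v m₀ (by positivity) (by positivity) (by positivity) (by positivity)
    _ ≤ lam * |x| + (x - x₀)^2/(2*sx) + (lam - lam₀)^2/(2*sl) := by
        rw [e3]; linarith

/-- Variable-coefficient ℓ₁ proximal operator when `sₓ·s_λ ≥ 1`: the minimizer has
`λ* = λ₀` if `λ₀/√s_λ > |x₀|/√sₓ` and `λ* = 0` if `λ₀/√s_λ < |x₀|/√sₓ`, with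
`x* = (|x₀| - sₓλ*)⁺ sgn(x₀)` in either case. -/
theorem vista_prox_large_steps (x₀ lam₀ sx sl : ℝ) (hx : 0 < sx) (hl : 0 < sl)
    (hprod : 1 ≤ sx * sl) (hlam₀ : 0 ≤ lam₀) :
    let cost : ℝ → ℝ → ℝ := fun x lam =>
      lam * |x| + (x - x₀) ^ 2 / (2 * sx) + (lam - lam₀) ^ 2 / (2 * sl)
    let lamStar : ℝ := if lam₀ / Real.sqrt sl > |x₀| / Real.sqrt sx then lam₀ else 0
    let xStar : ℝ := max (|x₀| - sx * lamStar) 0 * Real.sign x₀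
    lam₀ / Real.sqrt sl ≠ |x₀| / Real.sqrt sx →
      ∀ x lam : ℝ, 0 ≤ lam → cost xStar lamStar ≤ cost x lam := by
  intro cost lamStar xStar hne x lam hlam
  have hsx : (0:ℝ) < Real.sqrt sx := Real.sqrt_pos.2 hx
  have hsl : (0:ℝ) < Real.sqrt sl := Real.sqrt_pos.2 hl
  have hsx2 : Real.sqrt sx ^ 2 = sx := Real.sq_sqrt hx.le
  have hsl2 : Real.sqrt sl ^ 2 = sl := Real.sq_sqrt hl.le
  have hprod' : 1 ≤ Real.sqrt sx * Real.sqrt sl := by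
    rw [← Real.sqrt_mul hx.le]
    calc (1:ℝ) = Real.sqrt 1 := Real.sqrt_one.symm
      _ ≤ _ := Real.sqrt_le_sqrt hprod
  have hkey := key x₀ lam₀ sx sl x lam hx hl hprod hlam hlam₀
  by_cases hcase : lam₀ / Real.sqrt sl > |x₀| / Real.sqrt sx
  · -- λ* = λ₀, x* = 0
    have hls : lamStar = lam₀ := if_pos hcase
    have hmul : |x₀| * Real.sqrt sl < lam₀ * Real.sqrt sx := by
      exact (div_lt_div_iff₀ hsx hsl).1 hcase
    have hx0 : |x₀| - sx * lam₀ ≤ 0 := by nlinarith [abs_nonneg x₀]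
    have hxs : xStar = 0 := by
      simp only [xStar, hls, max_eq_right hx0, zero_mul]
    have hcost : cost xStar lamStar = x₀^2/(2*sx) := by
      simp only [cost, hxs, hls, abs_zero, mul_zero, sub_self, zero_sub]
      ring_nf
    have hmin : x₀^2/(2*sx) ≤ lam₀^2/(2*sl) := by
      have h2 : (|x₀| / Real.sqrt sx)^2 ≤ (lam₀ / Real.sqrt sl)^2 := by
        apply pow_le_pow_left₀ (by positivity) hcase.le
      rw [div_pow, div_pow, hsx2, hsl2, sq_abs] at h2
      rw [div_le_div_iff₀ (by positivity) (by positivity)]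
      rw [div_le_div_iff₀ (by positivity) (by positivity)] at h2
      nlinarith
    rw [hcost]
    calc x₀^2/(2*sx) = min (x₀^2/(2*sx)) (lam₀^2/(2*sl)) := (min_eq_left hmin).symm
      _ ≤ _ := hkey
  · -- λ* = 0, x* = x₀
    have hlt : lam₀ / Real.sqrt sl < |x₀| / Real.sqrt sx :=
      lt_of_le_of_ne (not_lt.1 hcase) hne
    have hls : lamStar = 0 := if_neg hcase
    have hxs : xStar = x₀ := by
      simp only [xStar, hls, mul_zero, sub_zero, max_eq_left (abs_nonneg x₀)]
      rcases lt_trichotomy x₀ 0 with h | h | h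
      · rw [Real.sign_of_neg h, abs_of_neg h]; ring
      · simp [h, Real.sign_zero]
      · rw [Real.sign_of_pos h, abs_of_pos h]; ring
    have hcost : cost xStar lamStar = lam₀^2/(2*sl) := by
      simp only [cost, hxs, hls, sub_self, zero_mul, zero_sub]
      ring_nf
    have hmin : lam₀^2/(2*sl) ≤ x₀^2/(2*sx) := by
      have h2 : (lam₀ / Real.sqrt sl)^2 ≤ (|x₀| / Real.sqrt sx)^2 := by
        apply pow_le_pow_left₀ (by positivity) hlt.le
      rw [div_pow, div_pow, hsx2, hsl2, sq_abs] at h2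
      rw [div_le_div_iff₀ (by positivity) (by positivity)]
      rw [div_le_div_iff₀ (by positivity) (by positivity)] at h2
      nlinarith
    rw [hcost]
    calc lam₀^2/(2*sl) = min (x₀^2/(2*sx)) (lam₀^2/(2*sl)) := (min_eq_right hmin).symm
      _ ≤ _ := hkey
end

section
/- When $s_x s_\lambda = 1$ and $\frac{\lambda_0}{\sqrt{s_\lambda}} = \frac{|x_0|}{\sqrt{s_x}}$ with $\lambda_0 > 0$, the proximal problem $\min_{x \in \mathbb{R}, \lambda \geq 0} \lambda|x| + \frac{(x-x_0)^2}{2s_x} + \frac{(\lambda-\lambda_0)^2}{2s_\lambda}$ has (at least) two distinct global minimizers: $(x_0, 0)$ and $(0, \lambda_0)$. -/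
/-- At the boundary case `sₓ s_λ = 1` and `λ₀/√s_λ = |x₀|/√sₓ` with `λ₀ > 0`, the proximal
problem has (at least) two distinct global minimizers: `(x₀, 0)` and `(0, λ₀)`. -/
theorem vista_prox_two_minimizers (x₀ lam₀ sx sl : ℝ) (hx : 0 < sx) (hl : 0 < sl)
    (hprod : sx * sl = 1) (heq : lam₀ / Real.sqrt sl = |x₀| / Real.sqrt sx)
    (hlam₀ : 0 < lam₀) :
    let cost : ℝ → ℝ → ℝ := fun x lam =>
      lam * |x| + (x - x₀) ^ 2 / (2 * sx) + (lam - lam₀) ^ 2 / (2 * sl)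
    (∀ x lam : ℝ, 0 ≤ lam → cost x₀ 0 ≤ cost x lam) ∧
    (∀ x lam : ℝ, 0 ≤ lam → cost 0 lam₀ ≤ cost x lam) ∧
    ((x₀, (0 : ℝ)) ≠ ((0 : ℝ), lam₀)) := by
  intro cost
  have hsl : sl = 1 / sx := by field_simp; linarith [hprod]
  have hsx : Real.sqrt sx > 0 := Real.sqrt_pos.mpr hx
  have hsl' : Real.sqrt sl > 0 := Real.sqrt_pos.mpr hl
  have h1 : lam₀ * Real.sqrt sx = |x₀| * Real.sqrt sl := by
    field_simp at heq; linarith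
  have h2 : lam₀ ^ 2 * sx = x₀ ^ 2 * sl := by
    have := congrArg (· ^ 2) h1
    simp only [mul_pow, Real.sq_sqrt hx.le, Real.sq_sqrt hl.le, sq_abs] at this
    exact this
  have hx0sq : x₀ ^ 2 = (lam₀ * sx) ^ 2 := by
    rw [hsl] at h2
    field_simp at h2
    nlinarith [h2]
  have hb : |x₀| = lam₀ * sx := by
    calc |x₀| = Real.sqrt (x₀ ^ 2) := (Real.sqrt_sq_eq_abs x₀).symm
      _ = Real.sqrt ((lam₀ * sx) ^ 2) := by rw [hx0sq]
      _ = lam₀ * sx := Real.sqrt_sq (by positivity)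
  subst hsl
  have key : ∀ x lam : ℝ, 0 ≤ lam →
      lam₀ ^ 2 / (2 * (1 / sx)) ≤
        lam * |x| + (x - x₀) ^ 2 / (2 * sx) + (lam - lam₀) ^ 2 / (2 * (1 / sx)) := by
    intro x lam hlam
    have htri : |x₀| ≤ |x| + |x - x₀| := by
      have h := abs_sub_abs_le_abs_sub x₀ x
      have h' : |x₀ - x| = |x - x₀| := abs_sub_comm _ _
      linarith [h, h'.le, h'.ge]
    have hd2 : |x - x₀| ^ 2 = (x - x₀) ^ 2 := sq_abs _
    rw [← sub_nonneg]
    have goalEq : lam * |x| + (x - x₀) ^ 2 / (2 * sx) + (lam - lam₀) ^ 2 / (2 * (1 / sx))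
        - lam₀ ^ 2 / (2 * (1 / sx))
        = (2 * sx * (lam * |x|) + (x - x₀) ^ 2 + sx ^ 2 * (lam - lam₀) ^ 2
            - lam₀ ^ 2 * sx ^ 2) / (2 * sx) := by
      field_simp
    rw [goalEq]
    apply div_nonneg _ (by positivity)
    have hmul : 2 * sx * lam * |x₀| ≤ 2 * sx * lam * (|x| + |x - x₀|) := by
      apply mul_le_mul_of_nonneg_left htri (by positivity)
    rw [hb] at hmul
    nlinarith [sq_nonneg (|x - x₀| - sx * lam), hmul, hd2, abs_nonneg (x - x₀),
      mul_nonneg hlam (abs_nonneg x), hx]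
  have hcosteq : cost 0 lam₀ = cost x₀ 0 := by
    simp only [cost]
    rw [abs_zero]
    have : x₀ ^ 2 = lam₀ ^ 2 * sx ^ 2 := by nlinarith [hx0sq]
    field_simp
    nlinarith [this]
  have hcx : cost x₀ 0 = lam₀ ^ 2 / (2 * (1 / sx)) := by
    simp only [cost]; ring_nf
  refine ⟨?_, ?_, ?_⟩
  · intro x lam hlam
    rw [hcx]
    have := key x lam hlam
    simpa [cost] using this
  · intro x lam hlam
    rw [hcosteq, hcx]
    simpa [cost] using key x lam hlam
  · intro h
    have := congrArg Prod.snd h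
    simp at this
    exact hlam₀.ne this
end

section
/- Let $q$ and $p$ be the densities of Laplace distributions $\mathrm{L}(\eta, \nu)$ and $\mathrm{L}(0, b)$ respectively (so $q(x) = \frac{1}{2\nu}e^{-|x-\eta|/\nu}$, $p(x) = \frac{1}{2b}e^{-|x|/b}$). Then $\mathrm{KL}(q \| p) = \int q(x)\log\frac{q(x)}{p(x)}dx = \frac{\nu e^{-|\eta|/\nu} + |\eta|}{b} + \log\frac{b}{\nu} - 1$. -/
open MeasureTheory Set Filter Real Topology

-- Ioi basic exponential integral
lemma aux_exp_Ioi (ν : ℝ) (hν : 0 < ν) (c : ℝ) :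
    IntegrableOn (fun x => rexp (-x / ν)) (Ioi c) ∧
      ∫ x in Ioi c, rexp (-x / ν) = ν * rexp (-c / ν) := by
  have hderiv : ∀ x ∈ Ici c, HasDerivAt (fun x => -ν * rexp (-x / ν)) (rexp (-x / ν)) x := by
    intro x _
    have h1 : HasDerivAt (fun x : ℝ => -x / ν) (-1 / ν) x := by
      simpa using (hasDerivAt_id x).neg.div_const ν
    have := (h1.exp).const_mul (-ν)
    refine this.congr_deriv ?_
    field_simp
  have hpos : ∀ x ∈ Ioi c, 0 ≤ rexp (-x / ν) := fun x _ => (exp_pos _).le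
  have hlim : Tendsto (fun x => -ν * rexp (-x / ν)) atTop (𝓝 0) := by
    have h2 : Tendsto (fun x : ℝ => x / ν) atTop atTop := tendsto_id.atTop_div_const hν
    have h3 : Tendsto (fun x : ℝ => rexp (-(x / ν))) atTop (𝓝 0) :=
      tendsto_exp_neg_atTop_nhds_zero.comp h2
    have := h3.const_mul (-ν)
    simpa [neg_div] using this
  refine ⟨integrableOn_Ioi_deriv_of_nonneg' hderiv hpos hlim, ?_⟩
  rw [integral_Ioi_of_hasDerivAt_of_nonneg' hderiv hpos hlim]
  ring

-- Ioi integral of (x - c) * exp (-x/ν)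
lemma aux_linexp_Ioi (ν : ℝ) (hν : 0 < ν) (c : ℝ) :
    IntegrableOn (fun x => (x - c) * rexp (-x / ν)) (Ioi c) ∧
      ∫ x in Ioi c, (x - c) * rexp (-x / ν) = ν ^ 2 * rexp (-c / ν) := by
  have hderiv : ∀ x ∈ Ici c,
      HasDerivAt (fun x => (-ν * (x - c) - ν ^ 2) * rexp (-x / ν)) ((x - c) * rexp (-x / ν)) x := by
    intro x _
    have h1 : HasDerivAt (fun x : ℝ => -x / ν) (-1 / ν) x := by
      simpa using (hasDerivAt_id x).neg.div_const ν
    have h2 : HasDerivAt (fun x : ℝ => -ν * (x - c) - ν ^ 2) (-ν) x := by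
      simpa using (((hasDerivAt_id x).sub_const c).const_mul (-ν)).sub_const (ν ^ 2)
    have := h2.mul h1.exp
    refine this.congr_deriv ?_
    field_simp
    ring
  have hpos : ∀ x ∈ Ioi c, 0 ≤ (x - c) * rexp (-x / ν) := fun x hx =>
    mul_nonneg (by simp at hx; linarith) (exp_pos _).le
  have hlim : Tendsto (fun x => (-ν * (x - c) - ν ^ 2) * rexp (-x / ν)) atTop (𝓝 0) := by
    have h2 : Tendsto (fun x : ℝ => x / ν) atTop atTop := tendsto_id.atTop_div_const hν
    have hxe : Tendsto (fun x : ℝ => (x / ν) * rexp (-(x / ν))) atTop (𝓝 0) := by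
      have := tendsto_pow_mul_exp_neg_atTop_nhds_zero 1
      simpa [Function.comp_def] using this.comp h2
    have he : Tendsto (fun x : ℝ => rexp (-(x / ν))) atTop (𝓝 0) :=
      tendsto_exp_neg_atTop_nhds_zero.comp h2
    have : Tendsto (fun x : ℝ =>
        (-ν * ν) * ((x / ν) * rexp (-(x / ν))) + (ν * c - ν ^ 2) * rexp (-(x / ν)))
        atTop (𝓝 ((-ν * ν) * 0 + (ν * c - ν ^ 2) * 0)) :=
      ((hxe.const_mul _).add (he.const_mul _))
    rw [show (-ν * ν) * 0 + (ν * c - ν ^ 2) * (0:ℝ) = 0 by ring] at this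
    refine this.congr fun x => ?_
    rw [neg_div]
    field_simp
    ring
  refine ⟨integrableOn_Ioi_deriv_of_nonneg' hderiv hpos hlim, ?_⟩
  rw [integral_Ioi_of_hasDerivAt_of_nonneg' hderiv hpos hlim]
  ring

-- interval integral of (c - x) * exp (-x/ν)
lemma aux_interval (ν : ℝ) (hν : 0 < ν) (c : ℝ) :
    ∫ x in (0:ℝ)..c, (c - x) * rexp (-x / ν)
      = ν ^ 2 * rexp (-c / ν) - ν ^ 2 + ν * c := by
  have hderiv : ∀ x ∈ uIcc (0:ℝ) c,
      HasDerivAt (fun x => (ν * x - ν * c + ν ^ 2) * rexp (-x / ν)) ((c - x) * rexp (-x / ν)) x := by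
    intro x _
    have h1 : HasDerivAt (fun x : ℝ => -x / ν) (-1 / ν) x := by
      simpa using (hasDerivAt_id x).neg.div_const ν
    have h2 : HasDerivAt (fun x : ℝ => ν * x - ν * c + ν ^ 2) ν x := by
      simpa using (((hasDerivAt_id x).const_mul ν).sub_const (ν * c)).add_const (ν ^ 2)
    have := h2.mul h1.exp
    refine this.congr_deriv ?_
    field_simp
    ring
  have hint : IntervalIntegrable (fun x => (c - x) * rexp (-x / ν)) volume 0 c := by
    apply Continuous.intervalIntegrable
    continuity
  have := intervalIntegral.integral_eq_sub_of_hasDerivAt hderiv hint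
  rw [this]
  simp
  ring

-- Ioi integral of |x - c| * exp (-x/ν), c ≥ 0
lemma aux_absexp_Ioi (ν c : ℝ) (hν : 0 < ν) (hc : 0 ≤ c) :
    IntegrableOn (fun x => |x - c| * rexp (-x / ν)) (Ioi 0) ∧
      ∫ x in Ioi 0, |x - c| * rexp (-x / ν)
        = 2 * ν ^ 2 * rexp (-c / ν) - ν ^ 2 + ν * c := by
  have hsplit : Ioc (0:ℝ) c ∪ Ioi c = Ioi 0 := Ioc_union_Ioi_eq_Ioi hc
  have hIoc : IntegrableOn (fun x => |x - c| * rexp (-x / ν)) (Ioc 0 c) := by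
    apply Continuous.integrableOn_Ioc
    continuity
  have hIoi : IntegrableOn (fun x => |x - c| * rexp (-x / ν)) (Ioi c) := by
    refine ((aux_linexp_Ioi ν hν c).1).congr_fun ?_ measurableSet_Ioi
    intro x hx
    simp only [mem_Ioi] at hx
    simp only
    rw [abs_of_nonneg (by linarith : (0:ℝ) ≤ x - c)]
  constructor
  · rw [← hsplit]
    exact hIoc.union hIoi
  · rw [← hsplit, setIntegral_union (Ioc_disjoint_Ioi le_rfl) measurableSet_Ioi hIoc hIoi]
    have h1 : ∫ x in Ioc (0:ℝ) c, |x - c| * rexp (-x / ν)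
        = ν ^ 2 * rexp (-c / ν) - ν ^ 2 + ν * c := by
      rw [← intervalIntegral.integral_of_le hc, ← aux_interval ν hν c]
      apply intervalIntegral.integral_congr
      intro x hx
      rw [uIcc_of_le hc] at hx
      simp only
      rw [abs_of_nonpos (by linarith [hx.2] : x - c ≤ 0)]
      ring
    have h2 : ∫ x in Ioi c, |x - c| * rexp (-x / ν) = ν ^ 2 * rexp (-c / ν) := by
      rw [← (aux_linexp_Ioi ν hν c).2]
      apply setIntegral_congr_fun measurableSet_Ioi
      intro x hx
      simp only [mem_Ioi] at hx
      simp only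
      rw [abs_of_nonneg (by linarith : (0:ℝ) ≤ x - c)]
    rw [h1, h2]
    ring

-- integrability on Iic 0 by reflection
lemma aux_integrableOn_Iic_neg {f : ℝ → ℝ}
    (h : IntegrableOn (fun x => f (-x)) (Ici 0)) : IntegrableOn f (Iic 0) := by
  rw [← (Measure.measurePreserving_neg (volume : Measure ℝ)).integrableOn_comp_preimage
      (Homeomorph.neg ℝ).measurableEmbedding]
  simpa [Function.comp_def, neg_preimage, neg_Iic, neg_zero] using h

-- value on Iic 0 by reflection
lemma aux_integral_Iic_neg (f : ℝ → ℝ) :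
    ∫ x in Iic (0:ℝ), f x = ∫ x in Ioi (0:ℝ), f (-x) := by
  have := integral_comp_neg_Iic (0:ℝ) (fun x => f (-x))
  simp only [neg_neg, neg_zero] at this
  exact this

-- full line: exp (-|x|/ν)
lemma aux_L1 (ν : ℝ) (hν : 0 < ν) :
    Integrable (fun x : ℝ => rexp (-|x| / ν)) ∧
      ∫ x : ℝ, rexp (-|x| / ν) = 2 * ν := by
  have hIoi : IntegrableOn (fun x : ℝ => rexp (-|x| / ν)) (Ioi 0) := by
    refine ((aux_exp_Ioi ν hν 0).1).congr_fun ?_ measurableSet_Ioi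
    intro x hx
    simp only [mem_Ioi] at hx
    simp [abs_of_pos hx]
  have hIic : IntegrableOn (fun x : ℝ => rexp (-|x| / ν)) (Iic 0) := by
    apply aux_integrableOn_Iic_neg
    simpa [abs_neg] using (integrableOn_Ici_iff_integrableOn_Ioi (f := fun x : ℝ => rexp (-|x| / ν))).2 hIoi
  have hval : ∫ x in Ioi (0:ℝ), rexp (-|x| / ν) = ν := by
    have : ∫ x in Ioi (0:ℝ), rexp (-|x| / ν) = ∫ x in Ioi (0:ℝ), rexp (-x / ν) := by
      apply setIntegral_congr_fun measurableSet_Ioi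
      intro x hx
      simp only [mem_Ioi] at hx
      simp [abs_of_pos hx]
    rw [this, (aux_exp_Ioi ν hν 0).2]
    simp
  refine ⟨?_, ?_⟩
  · rw [← integrableOn_univ, ← Iic_union_Ioi (a := (0:ℝ)), integrableOn_union]
    exact ⟨hIic, hIoi⟩
  · rw [← intervalIntegral.integral_Iic_add_Ioi hIic hIoi, aux_integral_Iic_neg]
    simp only [abs_neg]
    rw [hval]
    ring

-- full line: |x + c| * exp (-|x|/ν), c ≥ 0
lemma aux_key (ν c : ℝ) (hν : 0 < ν) (hc : 0 ≤ c) :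
    Integrable (fun x : ℝ => |x + c| * rexp (-|x| / ν)) ∧
      ∫ x : ℝ, |x + c| * rexp (-|x| / ν) = 2 * ν * (ν * rexp (-c / ν) + c) := by
  set f : ℝ → ℝ := fun x => |x + c| * rexp (-|x| / ν) with hf
  have hcong1 : ∀ x ∈ Ioi (0:ℝ),
      (x - 0) * rexp (-x / ν) + c * rexp (-x / ν) = f x := by
    intro x hx
    simp only [mem_Ioi] at hx
    simp only [hf, abs_of_pos hx, abs_of_nonneg (by linarith : (0:ℝ) ≤ x + c)]
    ring
  have hIoi : IntegrableOn f (Ioi 0) := by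
    have h : IntegrableOn (fun x => (x - 0) * rexp (-x / ν) + c * rexp (-x / ν)) (Ioi 0) :=
      ((aux_linexp_Ioi ν hν 0).1).add (((aux_exp_Ioi ν hν 0).1).const_mul c)
    exact h.congr_fun hcong1 measurableSet_Ioi
  have hvalIoi : ∫ x in Ioi (0:ℝ), f x = ν ^ 2 + c * ν := by
    rw [← setIntegral_congr_fun measurableSet_Ioi hcong1,
      integral_add (aux_linexp_Ioi ν hν 0).1 ((aux_exp_Ioi ν hν 0).1.const_mul c),
      (aux_linexp_Ioi ν hν 0).2, MeasureTheory.integral_const_mul, (aux_exp_Ioi ν hν 0).2]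
    simp
  have hcong2 : ∀ x ∈ Ioi (0:ℝ), |x - c| * rexp (-x / ν) = f (-x) := by
    intro x hx
    simp only [mem_Ioi] at hx
    simp only [hf, abs_neg, abs_of_pos hx]
    rw [show -x + c = -(x - c) by ring, abs_neg]
  have hIic : IntegrableOn f (Iic 0) := by
    apply aux_integrableOn_Iic_neg
    rw [integrableOn_Ici_iff_integrableOn_Ioi]
    exact ((aux_absexp_Ioi ν c hν hc).1).congr_fun hcong2 measurableSet_Ioi
  have hvalIic : ∫ x in Iic (0:ℝ), f x = 2 * ν ^ 2 * rexp (-c / ν) - ν ^ 2 + ν * c := by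
    rw [aux_integral_Iic_neg, ← setIntegral_congr_fun measurableSet_Ioi hcong2]
    exact (aux_absexp_Ioi ν c hν hc).2
  refine ⟨?_, ?_⟩
  · rw [← integrableOn_univ, ← Iic_union_Ioi (a := (0:ℝ)), integrableOn_union]
    exact ⟨hIic, hIoi⟩
  · rw [← intervalIntegral.integral_Iic_add_Ioi hIic hIoi, hvalIic, hvalIoi]
    ring

-- full line, any sign of c
lemma aux_key' (ν c : ℝ) (hν : 0 < ν) :
    Integrable (fun x : ℝ => |x + c| * rexp (-|x| / ν)) ∧
      ∫ x : ℝ, |x + c| * rexp (-|x| / ν) = 2 * ν * (ν * rexp (-|c| / ν) + |c|) := by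
  rcases le_or_gt 0 c with hc | hc
  · simpa [abs_of_nonneg hc] using aux_key ν c hν hc
  · have h := aux_key ν (-c) hν (by linarith)
    have hcomp : (fun x : ℝ => |x + -c| * rexp (-|x| / ν))
        = (fun x : ℝ => |x + c| * rexp (-|x| / ν)) ∘ (fun x : ℝ => -x) := by
      funext x
      simp only [Function.comp_apply, abs_neg]
      rw [show -x + c = -(x + -c) by ring, abs_neg]
    have hiff := (Measure.measurePreserving_neg (volume : Measure ℝ)).integrable_comp_emb
      (Homeomorph.neg ℝ).measurableEmbedding
      (g := fun x : ℝ => |x + c| * rexp (-|x| / ν))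
    constructor
    · rw [← hiff]
      rw [hcomp] at h
      exact h.1
    · have hval : ∫ x : ℝ, |x + c| * rexp (-|x| / ν)
          = ∫ x : ℝ, |(-x) + c| * rexp (-|(-x)| / ν) := by
        exact (integral_neg_eq_self _ _).symm
      rw [hval]
      have : (fun x : ℝ => |(-x) + c| * rexp (-|(-x)| / ν))
          = fun x : ℝ => |x + -c| * rexp (-|x| / ν) := by
        funext x
        rw [abs_neg, show -x + c = -(x + -c) by ring, abs_neg]
      rw [this, h.2, abs_of_neg hc]

/-- KL divergence between `Laplace(η, ν)` and `Laplace(0, b)`: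
`∫ q log(q/p) = (ν e^{-|η|/ν} + |η|)/b + log(b/ν) - 1`. -/
theorem laplace_kl_closed_form (η ν b : ℝ) (hν : 0 < ν) (hb : 0 < b) :
    (∫ x : ℝ,
        (1 / (2 * ν) * Real.exp (-|x - η| / ν)) *
          Real.log ((1 / (2 * ν) * Real.exp (-|x - η| / ν)) /
            (1 / (2 * b) * Real.exp (-|x| / b)))) =
      (ν * Real.exp (-|η| / ν) + |η|) / b + Real.log (b / ν) - 1 := by
  set K : ℝ := Real.log (b / ν) with hK
  set A0 : ℝ → ℝ := fun x => rexp (-|x - η| / ν) with hA0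
  set A1 : ℝ → ℝ := fun x => |x| * rexp (-|x - η| / ν) with hA1
  set A2 : ℝ → ℝ := fun x => |x - η| * rexp (-|x - η| / ν) with hA2
  -- integrability of the three pieces
  have hA0int : Integrable A0 := by
    have := (aux_L1 ν hν).1
    exact this.comp_sub_right η
  have hA1int : Integrable A1 := by
    have h2 := (aux_key' ν η hν).1.comp_sub_right η
    simpa using h2
  have hA2int : Integrable A2 := by
    have h := (aux_key' ν 0 hν).1
    simp only [add_zero] at h
    exact h.comp_sub_right η
  -- values
  have hA0val : ∫ x, A0 x = 2 * ν := by
    rw [hA0, show (fun x => rexp (-|x - η| / ν))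
        = fun x => (fun y => rexp (-|y| / ν)) (x - η) from rfl,
      integral_sub_right_eq_self (fun y => rexp (-|y| / ν)) η]
    exact (aux_L1 ν hν).2
  have hA1val : ∫ x, A1 x = 2 * ν * (ν * rexp (-|η| / ν) + |η|) := by
    rw [hA1, show (fun x => |x| * rexp (-|x - η| / ν))
        = fun x => (fun y => |y + η| * rexp (-|y| / ν)) (x - η) by
          funext x; simp [sub_add_cancel],
      integral_sub_right_eq_self (fun y => |y + η| * rexp (-|y| / ν)) η]
    exact (aux_key' ν η hν).2
  have hA2val : ∫ x, A2 x = 2 * ν ^ 2 := by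
    rw [hA2, show (fun x => |x - η| * rexp (-|x - η| / ν))
        = fun x => (fun y => |y| * rexp (-|y| / ν)) (x - η) from rfl,
      integral_sub_right_eq_self (fun y => |y| * rexp (-|y| / ν)) η]
    have := (aux_key' ν 0 hν).2
    simp only [add_zero, abs_zero, neg_zero, zero_div, Real.exp_zero] at this
    rw [this]
    ring
  -- pointwise rewrite of the integrand
  have hpt : ∀ x : ℝ,
      (1 / (2 * ν) * Real.exp (-|x - η| / ν)) *
          Real.log ((1 / (2 * ν) * Real.exp (-|x - η| / ν)) /
            (1 / (2 * b) * Real.exp (-|x| / b)))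
        = 1 / (2 * ν) * (K * A0 x + (1 / b) * A1 x - (1 / ν) * A2 x) := by
    intro x
    have hlog : Real.log ((1 / (2 * ν) * Real.exp (-|x - η| / ν)) /
          (1 / (2 * b) * Real.exp (-|x| / b)))
        = K + (-|x - η| / ν) - (-|x| / b) := by
      rw [Real.log_div (by positivity) (by positivity),
        Real.log_mul (by positivity) (Real.exp_ne_zero _),
        Real.log_mul (by positivity) (Real.exp_ne_zero _),
        Real.log_exp, Real.log_exp,
        Real.log_div one_ne_zero (by positivity),
        Real.log_div one_ne_zero (by positivity),
        hK, Real.log_div hb.ne' hν.ne',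
        Real.log_mul two_ne_zero hν.ne', Real.log_mul two_ne_zero hb.ne',
        Real.log_one]
      ring
    rw [hlog, hA0, hA1, hA2]
    simp only
    field_simp
    ring
  rw [integral_congr_ae (Filter.Eventually.of_forall hpt)]
  rw [MeasureTheory.integral_const_mul]
  have hI1 : Integrable (fun a => K * A0 a + 1 / b * A1 a) :=
    (hA0int.const_mul K).add (hA1int.const_mul (1 / b))
  have hI2 : Integrable (fun a => 1 / ν * A2 a) := hA2int.const_mul (1 / ν)
  have hIa : Integrable (fun a => K * A0 a) := hA0int.const_mul K
  have hIb : Integrable (fun a => 1 / b * A1 a) := hA1int.const_mul (1 / b)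
  rw [integral_sub hI1 hI2, integral_add hIa hIb,
    MeasureTheory.integral_const_mul, MeasureTheory.integral_const_mul,
    MeasureTheory.integral_const_mul, hA0val, hA1val, hA2val]
  field_simp
  ring
end

section
/- If $X$ follows a Laplace distribution with location $\eta \in \mathbb{R}$ and scale $\nu > 0$, then $\mathbb{E}|X| = \nu e^{-|\eta|/\nu} + |\eta|$. -/
open MeasureTheory Set Filter Real

private lemma tendsto_helper (ν : ℝ) (hν : 0 < ν) (a C D : ℝ) :
    Tendsto (fun x : ℝ => (C * x + D) * Real.exp ((a - x) / ν)) atTop (nhds 0) := by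
  have h1 : Tendsto (fun x : ℝ => (x - a) / ν) atTop atTop := by
    apply Tendsto.atTop_div_const hν
    simpa [sub_eq_add_neg] using tendsto_atTop_add_const_right atTop (-a) tendsto_id
  have h2 : Tendsto (fun x : ℝ => (x - a) / ν * Real.exp (-((x - a) / ν))) atTop (nhds 0) := by
    have := (tendsto_pow_mul_exp_neg_atTop_nhds_zero 1).comp h1
    simpa [Function.comp_def] using this
  have h3 : Tendsto (fun x : ℝ => Real.exp (-((x - a) / ν))) atTop (nhds 0) :=
    Real.tendsto_exp_atBot.comp (tendsto_neg_atTop_atBot.comp h1)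
  have h4 := (h2.const_mul (C * ν)).add (h3.const_mul (C * a + D))
  rw [mul_zero, mul_zero, add_zero] at h4
  refine h4.congr fun x => ?_
  rw [show (a - x) / ν = -((x - a) / ν) by ring]
  field_simp
  ring

private lemma hasDerivAt_F (ν : ℝ) (hν : ν ≠ 0) (a x : ℝ) :
    HasDerivAt (fun x : ℝ => -(ν * x + ν ^ 2) * Real.exp ((a - x) / ν))
      (x * Real.exp ((a - x) / ν)) x := by
  have h1 : HasDerivAt (fun x : ℝ => (a - x) / ν) (-1 / ν) x := by
    simpa using ((hasDerivAt_id x).const_sub a).div_const ν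
  have h2 := h1.exp
  have h3 : HasDerivAt (fun x : ℝ => -(ν * x + ν ^ 2)) (-ν) x := by
    exact (((hasDerivAt_id x).const_mul ν).add_const (ν ^ 2)).neg.congr_deriv (by simp)
  have := h3.mul h2
  refine this.congr_deriv ?_
  field_simp
  ring

private lemma hasDerivAt_G (ν : ℝ) (hν : ν ≠ 0) (a x : ℝ) :
    HasDerivAt (fun x : ℝ => (ν * x - ν ^ 2) * Real.exp ((x - a) / ν))
      (x * Real.exp ((x - a) / ν)) x := by
  have h1 : HasDerivAt (fun x : ℝ => (x - a) / ν) (1 / ν) x := by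
    simpa using ((hasDerivAt_id x).sub_const a).div_const ν
  have h2 := h1.exp
  have h3 : HasDerivAt (fun x : ℝ => ν * x - ν ^ 2) ν x := by
    simpa using (((hasDerivAt_id x).const_mul ν).sub_const (ν ^ 2))
  have := h3.mul h2
  refine this.congr_deriv ?_
  field_simp
  ring

private lemma integrableOn_Iic_of_neg {f : ℝ → ℝ} {c : ℝ}
    (hf : IntegrableOn (fun x => f (-x)) (Ioi (-c))) : IntegrableOn f (Iic c) := by
  have h_map : (volume.restrict (Ioi (-c))).map Neg.neg = volume.restrict (Iic c) := by
    conv_rhs => rw [← Measure.map_neg_eq_self (volume : Measure ℝ),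
      measurableEmbedding_neg.restrict_map]
    rw [show (Neg.neg ⁻¹' Iic c : Set ℝ) = Ici (-c) by ext x; simp [neg_le],
      ← restrict_Ioi_eq_restrict_Ici]
  rw [IntegrableOn, ← h_map, measurableEmbedding_neg.integrable_map_iff]
  exact hf

private lemma laplace_aux (η ν : ℝ) (hν : 0 < ν) (hη : 0 ≤ η) :
    (∫ x : ℝ, |x| * (1 / (2 * ν) * Real.exp (-|x - η| / ν))) =
      ν * Real.exp (-η / ν) + η := by
  have hν' : ν ≠ 0 := hν.ne'
  set φ : ℝ → ℝ := fun x => |x| * Real.exp (-|x - η| / ν) with hφ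
  -- the right tail
  have htR : Tendsto (fun x : ℝ => -(ν * x + ν ^ 2) * Real.exp ((η - x) / ν)) atTop (nhds 0) := by
    have := (tendsto_helper ν hν η ν (ν ^ 2)).neg
    rw [neg_zero] at this
    exact this.congr fun x => by ring
  have hIR_int : IntegrableOn (fun x : ℝ => x * Real.exp ((η - x) / ν)) (Ioi η) :=
    integrableOn_Ioi_deriv_of_nonneg' (fun x _ => hasDerivAt_F ν hν' η x)
      (fun x hx => mul_nonneg (le_of_lt (lt_of_le_of_lt hη hx)) (Real.exp_pos _).le) htR
  have IR : ∫ x in Ioi η, x * Real.exp ((η - x) / ν) = ν * η + ν ^ 2 := by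
    rw [integral_Ioi_of_hasDerivAt_of_nonneg' (fun x _ => hasDerivAt_F ν hν' η x)
      (fun x hx => mul_nonneg (le_of_lt (lt_of_le_of_lt hη hx)) (Real.exp_pos _).le) htR]
    simp [sub_self, Real.exp_zero]
  -- the left tail, after reflection
  have htL : Tendsto (fun x : ℝ => -(ν * x + ν ^ 2) * Real.exp ((-η - x) / ν)) atTop (nhds 0) := by
    have := (tendsto_helper ν hν (-η) ν (ν ^ 2)).neg
    rw [neg_zero] at this
    exact this.congr fun x => by ring
  have hIL'_int : IntegrableOn (fun x : ℝ => x * Real.exp ((-η - x) / ν)) (Ioi 0) :=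
    integrableOn_Ioi_deriv_of_nonneg' (fun x _ => hasDerivAt_F ν hν' (-η) x)
      (fun x hx => mul_nonneg hx.le (Real.exp_pos _).le) htL
  have IL' : ∫ x in Ioi (0 : ℝ), x * Real.exp ((-η - x) / ν) = ν ^ 2 * Real.exp (-η / ν) := by
    rw [integral_Ioi_of_hasDerivAt_of_nonneg' (fun x _ => hasDerivAt_F ν hν' (-η) x)
      (fun x hx => mul_nonneg hx.le (Real.exp_pos _).le) htL]
    simp [sub_zero]
  -- the middle
  have IM : ∫ x in (0:ℝ)..η, x * Real.exp ((x - η) / ν)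
      = ν * η - ν ^ 2 + ν ^ 2 * Real.exp (-η / ν) := by
    rw [intervalIntegral.integral_eq_sub_of_hasDerivAt (fun x _ => hasDerivAt_G ν hν' η x)
      ((Continuous.mul continuous_id (by fun_prop)).intervalIntegrable 0 η)]
    simp [sub_self, Real.exp_zero, zero_sub]
  -- pointwise identification of φ on the three pieces
  have hEqL : EqOn φ (fun x => -x * Real.exp ((x - η) / ν)) (Iic 0) := by
    intro x hx
    have hx0 : x ≤ (0:ℝ) := hx
    simp only [hφ]
    rw [abs_of_nonpos hx0, abs_of_nonpos (by linarith : x - η ≤ 0), neg_neg]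
  have hEqM : EqOn φ (fun x => x * Real.exp ((x - η) / ν)) (Ioc 0 η) := by
    intro x hx
    simp only [hφ]
    rw [abs_of_pos hx.1, abs_of_nonpos (by linarith [hx.2] : x - η ≤ 0), neg_neg]
  have hEqR : EqOn φ (fun x => x * Real.exp ((η - x) / ν)) (Ioi η) := by
    intro x hx
    simp only [hφ]
    rw [abs_of_nonneg (le_of_lt (lt_of_le_of_lt hη hx)),
      abs_of_pos (sub_pos.mpr hx), neg_sub]
  -- integrability of φ on the pieces
  have hψ_int : IntegrableOn (fun x : ℝ => -x * Real.exp ((x - η) / ν)) (Iic 0) := by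
    apply integrableOn_Iic_of_neg
    rw [neg_zero]
    refine hIL'_int.congr_fun (fun x _ => ?_) measurableSet_Ioi
    show x * Real.exp ((-η - x) / ν) = -(-x) * Real.exp ((-x - η) / ν)
    rw [show (-x - η) / ν = (-η - x) / ν by ring, neg_neg]
  have hL_int : IntegrableOn φ (Iic 0) := hψ_int.congr_fun hEqL.symm measurableSet_Iic
  have hM'_int : IntegrableOn (fun x : ℝ => x * Real.exp ((x - η) / ν)) (Ioc 0 η) :=
    Continuous.integrableOn_Ioc (by fun_prop)
  have hM_int : IntegrableOn φ (Ioc 0 η) := hM'_int.congr_fun hEqM.symm measurableSet_Ioc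
  have hR_int : IntegrableOn φ (Ioi η) := hIR_int.congr_fun hEqR.symm measurableSet_Ioi
  have hIoi_int : IntegrableOn φ (Ioi 0) := by
    rw [← Ioc_union_Ioi_eq_Ioi hη]
    exact hM_int.union hR_int
  -- values of the three pieces
  have L_val : ∫ x in Iic (0:ℝ), φ x = ν ^ 2 * Real.exp (-η / ν) := by
    rw [setIntegral_congr_fun measurableSet_Iic hEqL]
    have step : ∫ x in Iic (0:ℝ), -x * Real.exp ((x - η) / ν)
        = ∫ x in Iic (0:ℝ), (fun y : ℝ => y * Real.exp ((-η - y) / ν)) (-x) := by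
      refine setIntegral_congr_fun measurableSet_Iic (fun x _ => ?_)
      show -x * Real.exp ((x - η) / ν) = -x * Real.exp ((-η - -x) / ν)
      rw [show (-η - -x) / ν = (x - η) / ν by ring]
    have hrefl := integral_comp_neg_Iic (0 : ℝ) (fun y : ℝ => y * Real.exp ((-η - y) / ν))
    rw [neg_zero] at hrefl
    rw [step, hrefl]
    exact IL'
  have M_val : ∫ x in Ioc (0:ℝ) η, φ x = ν * η - ν ^ 2 + ν ^ 2 * Real.exp (-η / ν) := by
    rw [setIntegral_congr_fun measurableSet_Ioc hEqM, ← intervalIntegral.integral_of_le hη, IM]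
  have R_val : ∫ x in Ioi η, φ x = ν * η + ν ^ 2 := by
    rw [setIntegral_congr_fun measurableSet_Ioi hEqR]
    exact IR
  have Ioi_val : ∫ x in Ioi (0:ℝ), φ x
      = (ν * η - ν ^ 2 + ν ^ 2 * Real.exp (-η / ν)) + (ν * η + ν ^ 2) := by
    rw [← Ioc_union_Ioi_eq_Ioi hη,
      setIntegral_union (Ioc_disjoint_Ioi le_rfl) measurableSet_Ioi hM_int hR_int, M_val, R_val]
  -- assemble
  have key : (fun x : ℝ => |x| * (1 / (2 * ν) * Real.exp (-|x - η| / ν)))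
      = fun x => 1 / (2 * ν) * φ x := by
    funext x
    simp only [hφ]
    ring
  rw [key, integral_const_mul, ← intervalIntegral.integral_Iic_add_Ioi hL_int hIoi_int, L_val, Ioi_val]
  field_simp
  ring

/-- For `X ~ Laplace(η, ν)` with density `x ↦ e^{-|x-η|/ν}/(2ν)`, the expected absolute
value is `E|X| = ν e^{-|η|/ν} + |η|`. -/
theorem laplace_expected_abs (η ν : ℝ) (hν : 0 < ν) :
    (∫ x : ℝ, |x| * (1 / (2 * ν) * Real.exp (-|x - η| / ν))) =
      ν * Real.exp (-|η| / ν) + |η| := by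
  rcases le_or_gt 0 η with hη | hη
  · rw [abs_of_nonneg hη]
    exact laplace_aux η ν hν hη
  · have h := laplace_aux (-η) ν hν (by linarith)
    rw [abs_of_neg hη, ← h]
    have key : (fun x : ℝ => |x| * (1 / (2 * ν) * Real.exp (-|x - η| / ν)))
        = fun x : ℝ => (fun y : ℝ => |y| * (1 / (2 * ν) * Real.exp (-|y - -η| / ν))) (-x) := by
      funext x
      simp only
      rw [abs_neg, show -x - -η = -(x - η) by ring, abs_neg]
    rw [key]
    exact integral_neg_eq_self (fun y : ℝ => |y| * (1 / (2 * ν) * Real.exp (-|y - -η| / ν))) volume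
end
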